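/- Fix ε with 0 < ε ≤ 1/400 and set ε₀ = 16ε. With Q_D the explicit quantile function defined in the context, for every p ∈ [0, 1/2 + √ε] one has p·Q_D(p) ≤ 0.4 + 4.8·ε + 12.8·ε^{3/2}; in particular, since the optimal revenue of D is 0.4 + 6.4·ε + 51.2·ε^{3/2}, every such p satisfies p·Q_D(p) < (0.4 + 6.4·ε + 51.2·ε^{3/2}) − ε. -/

import Mathlib

/-!
Since `p ≤ 1/2 + √ε < 1/2 + √ε₀/2`, only the first two pieces of `Q_D` matter. On `[0, 1/2)`
the revenue `p (1 - 0.4 p)` stays below `0.4`. On the middle piece write `p = 1/2 + t` with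
`0 ≤ t ≤ s = √ε`; the revenue is `0.4 + 6.4 s t - 1.6 t² + 12.8 s t²`, and
`4.8 s² - 6.4 s t + 1.6 t² = 1.6 (s - t)(3 s - t) ≥ 0`, so it is at most `0.4 + 4.8 s² + 12.8 s³`.
-/

/-- Quantile function of the perturbed distribution `D` (with `ε₀ = 16ε`). -/
noncomputable def QD (ε₀ : ℝ) (v : ℝ) : ℝ :=
  if v < 1 / 2 then 1 - 0.4 * v
  else if v < 1 / 2 + Real.sqrt ε₀ / 2 then 0.8 - (1.6 - 3.2 * Real.sqrt ε₀) * (v - 1 / 2)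
  else (1.6 + 3.2 * ε₀ / (1 - Real.sqrt ε₀)) * (1 - v)

lemma Real.sqrt_sixteen_mul (x : ℝ) : √(16 * x) = 4 * √x := by
  rw [Real.sqrt_mul (by norm_num) x, show (16 : ℝ) = 4 ^ 2 by norm_num, Real.sqrt_sq (by norm_num)]

lemma Real.rpow_three_halves {x : ℝ} (hx : 0 ≤ x) : x ^ ((3 : ℝ) / 2) = x * √x := by
  rw [show (3 : ℝ) / 2 = 1 + 1 / 2 by norm_num, Real.rpow_add' hx (by norm_num), Real.rpow_one,
    Real.sqrt_eq_rpow]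

lemma revenue_le_of_le_half {p : ℝ} (hp : p ≤ 1 / 2) : p * (1 - 0.4 * p) ≤ 0.4 := by
  nlinarith [mul_nonneg (sub_nonneg.mpr hp) (by linarith : (0 : ℝ) ≤ 2 - p)]

lemma revenue_le_of_mem_Icc {s p : ℝ} (hs : 0 ≤ s) (hp : p ∈ Set.Icc (1 / 2) (1 / 2 + s)) :
    p * (0.8 - (1.6 - 3.2 * (4 * s)) * (p - 1 / 2)) ≤ 0.4 + 4.8 * s ^ 2 + 12.8 * s ^ 3 := by
  obtain ⟨t, ht0, hts, rfl⟩ : ∃ t, 0 ≤ t ∧ t ≤ s ∧ p = 1 / 2 + t :=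
    ⟨p - 1 / 2, by linarith [hp.1], by linarith [hp.2], by ring⟩
  have hquad : 0 ≤ (s - t) * (3 * s - t) := mul_nonneg (by linarith) (by linarith)
  have hcube : s * t ^ 2 ≤ s * s ^ 2 := mul_le_mul_of_nonneg_left (pow_le_pow_left₀ ht0 hts 2) hs
  nlinarith

lemma mul_QD_le {ε p : ℝ} (hε : 0 < ε) (hp : p ≤ 1 / 2 + √ε) :
    p * QD (16 * ε) p ≤ 0.4 + 4.8 * ε + 12.8 * ε ^ ((3 : ℝ) / 2) := by
  have hs : 0 < √ε := Real.sqrt_pos.mpr hε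
  have hsq : √ε ^ 2 = ε := Real.sq_sqrt hε.le
  rw [Real.rpow_three_halves hε.le, QD, Real.sqrt_sixteen_mul]
  split_ifs with hlow hmid
  · nlinarith [revenue_le_of_le_half hlow.le, mul_pos hε hs]
  · have := revenue_le_of_mem_Icc hs.le ⟨not_lt.mp hlow, hp⟩
    nlinarith
  · exact absurd (by linarith : p < 1 / 2 + 4 * √ε / 2) hmid

theorem low_prices_suboptimal_for_D_general (ε : ℝ) (hε : 0 < ε) :
    ∀ p ∈ Set.Icc (0:ℝ) (1 / 2 + Real.sqrt ε),
      p * QD (16 * ε) p ≤ 0.4 + 4.8 * ε + 12.8 * ε ^ ((3:ℝ)/2) ∧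
      p * QD (16 * ε) p < (0.4 + 6.4 * ε + 51.2 * ε ^ ((3:ℝ)/2)) - ε := by
  intro p hp
  have hrev := mul_QD_le hε hp.2
  refine ⟨hrev, hrev.trans_lt ?_⟩
  have : 0 < ε ^ ((3 : ℝ) / 2) := Real.rpow_pos_of_pos hε _
  linarith

/-- Every price `p ≤ 1/2 + √ε` earns revenue at most `0.4 + 4.8ε + 12.8ε^{3/2}` against `D`;
in particular its revenue is more than `ε` below the optimal revenue
`0.4 + 6.4ε + 51.2ε^{3/2}` of `D`. -/
theorem low_prices_suboptimal_for_D (ε : ℝ) (hε : 0 < ε) (hε' : ε ≤ 1 / 400) :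
    ∀ p ∈ Set.Icc (0:ℝ) (1 / 2 + Real.sqrt ε),
      p * QD (16 * ε) p ≤ 0.4 + 4.8 * ε + 12.8 * ε ^ ((3:ℝ)/2) ∧
      p * QD (16 * ε) p < (0.4 + 6.4 * ε + 51.2 * ε ^ ((3:ℝ)/2)) - ε :=
  low_prices_suboptimal_for_D_general ε hε
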